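/- In the Game of Confidentiality, if Alice shares her secret a with Bob, then the profile (a?T:B, a?N:F, c?L:R) yields expected payoffs (10,6,12) and is a Nash equilibrium; in particular Alice and Bob each gain 2 in their pairwise context instead of 1, while the Bob–Carol and Alice–Carol context payoffs are unchanged since Carol does not know a. -/

import Mathlib

inductive ACh | T | M | B
  deriving DecidableEq
instance : Fintype ACh :=
  ⟨{ACh.T, ACh.M, ACh.B}, fun x => by cases x <;> decide⟩
inductive BCh | N | I | F
  deriving DecidableEq
instance : Fintype BCh :=
  ⟨{BCh.N, BCh.I, BCh.F}, fun x => by cases x <;> decide⟩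
inductive CCh | L | Cc | R
  deriving DecidableEq
instance : Fintype CCh :=
  ⟨{CCh.L, CCh.Cc, CCh.R}, fun x => by cases x <;> decide⟩

def gACa : ACh → CCh → ℚ
  | .T, .L => 0
  | .T, .Cc => 0
  | .T, .R => 16
  | .M, .L => 4
  | .M, .Cc => 4
  | .M, .R => 4
  | .B, .L => 16
  | .B, .Cc => 0
  | .B, .R => 0

def gACc : ACh → CCh → ℚ
  | .T, .L => 16
  | .T, .Cc => 4
  | .T, .R => 0
  | .M, .L => 0
  | .M, .Cc => 4
  | .M, .R => 0
  | .B, .L => 0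
  | .B, .Cc => 4
  | .B, .R => 16

def gABa : ACh → BCh → ℚ
  | .T, .N => 2
  | .T, .I => 0
  | .T, .F => 0
  | .M, .N => 0
  | .M, .I => 2
  | .M, .F => 0
  | .B, .N => 0
  | .B, .I => 0
  | .B, .F => 2

def gABb : ACh → BCh → ℚ
  | .T, .N => 2
  | .T, .I => 0
  | .T, .F => 0
  | .M, .N => 0
  | .M, .I => 2
  | .M, .F => 0
  | .B, .N => 0
  | .B, .I => 0
  | .B, .F => 2

def gBCb : BCh → CCh → ℚ
  | .N, .L => 0
  | .N, .Cc => 0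
  | .N, .R => 8
  | .I, .L => 2
  | .I, .Cc => 2
  | .I, .R => 2
  | .F, .L => 8
  | .F, .Cc => 0
  | .F, .R => 0

def gBCc : BCh → CCh → ℚ
  | .N, .L => 8
  | .N, .Cc => 2
  | .N, .R => 0
  | .I, .L => 0
  | .I, .Cc => 2
  | .I, .R => 0
  | .F, .L => 0
  | .F, .Cc => 2
  | .F, .R => 8

def uA (x : ACh) (y : BCh) (z : CCh) : ℚ := gACa x z + gABa x y
def uB (x : ACh) (y : BCh) (z : CCh) : ℚ := gABb x y + gBCb y z
def uC (x : ACh) (y : BCh) (z : CCh) : ℚ := gACc x z + gBCc y z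

def EU (u : ACh → BCh → CCh → ℚ)
    (sA : Bool → ACh) (sB : Bool → Bool → BCh) (sC : Bool → CCh) : ℚ :=
  (∑ a : Bool, ∑ b : Bool, ∑ c : Bool, u (sA a) (sB a b) (sC c)) / 8

def Nash (sA : Bool → ACh) (sB : Bool → Bool → BCh) (sC : Bool → CCh) : Prop :=
  (∀ sA' : Bool → ACh, EU uA sA' sB sC ≤ EU uA sA sB sC) ∧
  (∀ sB' : Bool → Bool → BCh, EU uB sA sB' sC ≤ EU uB sA sB sC) ∧
  (∀ sC' : Bool → CCh, EU uC sA sB sC' ≤ EU uC sA sB sC)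

def sAstar : Bool → ACh := fun a => if a then .T else .B
def sBstar : Bool → Bool → BCh := fun a _ => if a then .N else .F
def sCstar : Bool → CCh := fun c => if c then .L else .R


def fB (x : ACh) (y : BCh) : ℚ := 2 * gABb x y + gBCb y .L + gBCb y .R

lemma fB_T (y : BCh) : fB .T y ≤ 12 := by cases y <;> norm_num [fB, gABb, gBCb]
lemma fB_B (y : BCh) : fB .B y ≤ 12 := by cases y <;> norm_num [fB, gABb, gBCb]

lemma EUB (sB' : Bool → Bool → BCh) :
    EU uB sAstar sB' sCstar =
      (fB .T (sB' true true) + fB .T (sB' true false) +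
       fB .B (sB' false true) + fB .B (sB' false false)) / 8 := by
  simp only [EU, Fintype.sum_bool, sAstar, sCstar, uB, fB]; norm_num; ring

/-- When Alice shares a with Bob, the profile (a?T:B, a?N:F, c?L:R) pays (10,6,12)
and is a Nash equilibrium. -/
theorem confidentiality_shared_nash :
    EU uA sAstar sBstar sCstar = 10 ∧
    EU uB sAstar sBstar sCstar = 6 ∧
    EU uC sAstar sBstar sCstar = 12 ∧
    Nash sAstar sBstar sCstar := by
  refine ⟨by simp only [EU, Fintype.sum_bool, sAstar, sBstar, sCstar, uA]; norm_num [gACa, gABa],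
          by simp only [EU, Fintype.sum_bool, sAstar, sBstar, sCstar, uB]; norm_num [gABb, gBCb],
          by simp only [EU, Fintype.sum_bool, sAstar, sBstar, sCstar, uC]; norm_num [gACc, gBCc], ?_, ?_, ?_⟩
  · intro sA'
    cases h1 : sA' true <;> cases h2 : sA' false <;>
      simp only [EU, Fintype.sum_bool, sAstar, sBstar, sCstar, h1, h2, uA] <;> norm_num [gACa, gABa]
  · intro sB'
    have hstar : EU uB sAstar sBstar sCstar = 6 := by
      simp only [EU, Fintype.sum_bool, sAstar, sBstar, sCstar, uB]; norm_num [gABb, gBCb]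
    rw [EUB, hstar]
    have := fB_T (sB' true true); have := fB_T (sB' true false)
    have := fB_B (sB' false true); have := fB_B (sB' false false)
    linarith
  · intro sC'
    cases h1 : sC' true <;> cases h2 : sC' false <;>
      simp only [EU, Fintype.sum_bool, sAstar, sBstar, sCstar, h1, h2, uC] <;> norm_num [gACc, gBCc]
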